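/- Let P, Q be orthogonal rank-one projections on a complex Hilbert space, 0 < λ < μ, λ + μ = 1, and A = λP + μQ. For every rank-one projection R whose range lies in range(A), the strength satisfies λ(A,R) = λμ / ((μ − λ)·tr(PR) + λ), where λ(A,R) = sup { t ∈ [0,1] : t·R ≤ A }. -/

import Mathlib

open scoped InnerProductSpace

variable {H : Type*} [NormedAddCommGroup H] [InnerProductSpace ℂ H] [CompleteSpace H]

/-- The trace of `A` is one: in every Hilbert basis, the diagonal sums to `1`. -/
def HasTraceOne (A : H →L[ℂ] H) : Prop :=
  ∀ (w : Set H) (b : HilbertBasis w ℂ H),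
    HasSum (fun i => RCLike.re (⟪(b i : H), A (b i)⟫_ℂ)) 1

/-- A state: a positive (trace-class) operator of trace one. -/
def IsState (A : H →L[ℂ] H) : Prop := A.IsPositive ∧ HasTraceOne A

/-- A rank-one orthogonal projection (pure state). -/
def IsRankOneProjection (P : H →L[ℂ] H) : Prop :=
  IsIdempotentElem P ∧ IsSelfAdjoint P ∧ Module.finrank ℂ (LinearMap.range (P : H →ₗ[ℂ] H)) = 1

/-- The strength of the effect `T` along `P`: `sup { t ∈ [0,1] : t • P ≤ T }`. -/
noncomputable def strength (T P : H →L[ℂ] H) : ℝ :=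
  sSup {t : ℝ | t ∈ Set.Icc (0:ℝ) 1 ∧ t • P ≤ T}

/-- The positive square root of a positive operator. -/
noncomputable def opSqrt (A : H →L[ℂ] H) : H →L[ℂ] H := CFC.sqrt A

/-!
For a positive operator `A` and `r = A y`, Cauchy–Schwarz for the semi-inner product
`⟪A ·, ·⟫` shows that `t • |r⟩⟨r| ≤ A` exactly when `t * ⟪A y, y⟫ ≤ 1`, so the strength of `A`
along `|r⟩⟨r|` is `min 1 ⟪A y, y⟫⁻¹`, i.e. `1 / ⟪r, A⁻¹ r⟫` on the range of `A`.

For `A = λ|p⟩⟨p| + μ|q⟩⟨q|` with `p ⟂ q`, put `u = |⟪p, y⟫|²` and `v = |⟪q, y⟫|²`. Then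
`⟪A y, y⟫ = λu + μv`, `‖r‖² = λ²u + μ²v = 1` and `tr (P R) = |⟪p, r⟫|² = λ²u`. Since `λ, μ ≤ 1`
we get `⟪A y, y⟫ ≥ 1`, and `(μ - λ) λ² u + λ = λ μ ⟪A y, y⟫` gives the formula.
-/

open InnerProductSpace RCLike

theorem ContinuousLinearMap.IsPositive.norm_inner_apply_sq_le {A : H →L[ℂ] H}
    (hA : A.IsPositive) (x y : H) :
    ‖⟪A x, y⟫_ℂ‖ ^ 2 ≤ re ⟪A x, x⟫_ℂ * re ⟪A y, y⟫_ℂ := by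
  have hA0 : 0 ≤ A := (ContinuousLinearMap.nonneg_iff_isPositive A).mpr hA
  have hS : IsSelfAdjoint (CFC.sqrt A) := IsSelfAdjoint.of_nonneg (CFC.sqrt_nonneg A)
  have hA_eq : ∀ u v, ⟪A u, v⟫_ℂ = ⟪CFC.sqrt A u, CFC.sqrt A v⟫_ℂ := fun u v => by
    conv_lhs => rw [← CFC.sqrt_mul_sqrt_self A hA0]
    exact hS.isSymmetric _ _
  rw [hA_eq, hA_eq, hA_eq, inner_self_eq_norm_sq, inner_self_eq_norm_sq, ← mul_pow]
  exact pow_le_pow_left₀ (norm_nonneg _) (norm_inner_le_norm _ _) 2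

theorem IsStarProjection.eq_rankOne_of_range_eq {𝕜 E : Type*} [RCLike 𝕜]
    [NormedAddCommGroup E] [InnerProductSpace 𝕜 E] [CompleteSpace E] {P : E →L[𝕜] E}
    (hP : IsStarProjection P) {v : E} (hv : ‖v‖ = 1) (hrange : P.range = 𝕜 ∙ v) :
    P = rankOne 𝕜 v v := by
  obtain ⟨_, hPeq⟩ := isStarProjection_iff_eq_starProjection_range.mp hP
  ext w
  rw [hPeq]
  simp [hrange, Submodule.starProjection_singleton, hv]

theorem IsRankOneProjection.exists_eq_rankOne {P : H →L[ℂ] H} (hP : IsRankOneProjection P) :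
    ∃ v : H, ‖v‖ = 1 ∧ P = rankOne ℂ v v := by
  obtain ⟨hidem, hadj, hrank⟩ := hP
  have hbot : LinearMap.range (P : H →ₗ[ℂ] H) ≠ ⊥ := by
    rintro h
    rw [h, finrank_bot] at hrank
    exact zero_ne_one hrank
  obtain ⟨w, hw, hw0⟩ := Submodule.exists_mem_ne_zero_of_ne_bot hbot
  have hv : ‖(‖w‖⁻¹ : ℂ) • w‖ = 1 := norm_smul_inv_norm hw0
  refine ⟨_, hv, IsStarProjection.eq_rankOne_of_range_eq ⟨hidem, hadj⟩ hv ?_⟩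
  exact eq_span_singleton_of_mem_of_finrank_eq_one hrank
    (Submodule.smul_mem _ _ hw) (norm_ne_zero_iff.mp (hv ▸ one_ne_zero))

theorem re_inner_smul_rankOne_self_apply {E : Type*} [NormedAddCommGroup E]
    [InnerProductSpace ℂ E] (r x : E) (t : ℝ) :
    re ⟪(t • rankOne ℂ r r) x, x⟫_ℂ = t * ‖⟪r, x⟫_ℂ‖ ^ 2 := by
  rw [smul_apply, real_smul_eq_coe_smul (K := ℂ), inner_smul_real_left, inner_left_rankOne_apply,
    ← inner_conj_symm, RCLike.conj_mul, smul_re, ← ofReal_pow, ofReal_re]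

theorem smul_rankOne_self_le_iff {A : H →L[ℂ] H} (hA : IsSelfAdjoint A) (r : H) (t : ℝ) :
    t • rankOne ℂ r r ≤ A ↔ ∀ x, t * ‖⟪r, x⟫_ℂ‖ ^ 2 ≤ re ⟪A x, x⟫_ℂ := by
  have hR : IsSelfAdjoint (t • rankOne ℂ r r) :=
    .smul (.all t) (isPositive_rankOne_self (𝕜 := ℂ) r).isSelfAdjoint
  rw [ContinuousLinearMap.le_def, ContinuousLinearMap.isPositive_def', and_iff_right (hA.sub hR)]
  refine forall_congr' fun x => ?_
  rw [ContinuousLinearMap.reApplyInnerSelf, sub_apply, inner_sub_left, map_sub,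
    re_inner_smul_rankOne_self_apply, sub_nonneg]

theorem ContinuousLinearMap.IsPositive.smul_rankOne_apply_self_le_iff {A : H →L[ℂ] H}
    (hA : A.IsPositive) (y : H) {t : ℝ} (ht : 0 ≤ t) :
    t • rankOne ℂ (A y) (A y) ≤ A ↔ t * re ⟪A y, y⟫_ℂ ≤ 1 := by
  set s := re ⟪A y, y⟫_ℂ
  have hs : 0 ≤ s := hA.re_inner_nonneg_left y
  rw [smul_rankOne_self_le_iff hA.isSelfAdjoint]
  constructor
  · intro h
    have hsy : s ^ 2 ≤ ‖⟪A y, y⟫_ℂ‖ ^ 2 := pow_le_pow_left₀ hs (re_le_norm _) 2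
    have : t * s ^ 2 ≤ s := (mul_le_mul_of_nonneg_left hsy ht).trans (h y)
    rcases hs.eq_or_lt with hs0 | hspos
    · simp [← hs0]
    · nlinarith
  · intro h x
    calc t * ‖⟪A y, x⟫_ℂ‖ ^ 2 ≤ t * (s * re ⟪A x, x⟫_ℂ) :=
          mul_le_mul_of_nonneg_left (hA.norm_inner_apply_sq_le y x) ht
      _ = (t * s) * re ⟪A x, x⟫_ℂ := by ring
      _ ≤ re ⟪A x, x⟫_ℂ := mul_le_of_le_one_left (hA.re_inner_nonneg_left x) h

theorem ContinuousLinearMap.IsPositive.strength_rankOne_apply_self {A : H →L[ℂ] H}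
    (hA : A.IsPositive) {y : H} (hy : 0 < re ⟪A y, y⟫_ℂ) :
    strength A (rankOne ℂ (A y) (A y)) = min 1 (re ⟪A y, y⟫_ℂ)⁻¹ := by
  have hset : {t : ℝ | t ∈ Set.Icc (0:ℝ) 1 ∧ t • rankOne ℂ (A y) (A y) ≤ A} =
      Set.Icc 0 (min 1 (re ⟪A y, y⟫_ℂ)⁻¹) := by
    ext t
    simp only [Set.mem_ofPred_eq, Set.mem_Icc, le_min_iff, ← one_div, le_div_iff₀ hy]
    exact ⟨fun ⟨⟨ht0, ht1⟩, hle⟩ => ⟨ht0, ht1, (hA.smul_rankOne_apply_self_le_iff y ht0).mp hle⟩,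
      fun ⟨ht0, ht1, hts⟩ => ⟨⟨ht0, ht1⟩, (hA.smul_rankOne_apply_self_le_iff y ht0).mpr hts⟩⟩
  rw [strength, hset, csSup_Icc (le_min zero_le_one (inv_nonneg.mpr hy.le))]

theorem inner_eq_zero_of_rankOne_comp_rankOne_eq_zero {𝕜 E : Type*} [RCLike 𝕜]
    [NormedAddCommGroup E] [InnerProductSpace 𝕜 E] {x y z w : E} (hx : x ≠ 0) (hw : w ≠ 0)
    (h : rankOne 𝕜 x y ∘L rankOne 𝕜 z w = 0) : ⟪y, z⟫_𝕜 = 0 := by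
  rw [rankOne_comp_rankOne, smul_eq_zero, rankOne_eq_zero] at h
  tauto

theorem ContinuousLinearMap.IsPositive.smul_real {E : Type*} [NormedAddCommGroup E]
    [InnerProductSpace ℂ E] {T : E →L[ℂ] E} (hT : T.IsPositive) {c : ℝ} (hc : 0 ≤ c) :
    (c • T).IsPositive := by
  rw [real_smul_eq_coe_smul (K := ℂ)]
  exact hT.smul_of_nonneg (Complex.zero_le_real.mpr hc)

section TwoLevel

variable {E : Type*} [NormedAddCommGroup E] [InnerProductSpace ℂ E]

theorem smul_rankOne_add_smul_rankOne_apply (p q : E) (l m : ℝ) (y : E) :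
    (l • rankOne ℂ p p + m • rankOne ℂ q q) y = (l * ⟪p, y⟫_ℂ) • p + (m * ⟪q, y⟫_ℂ) • q := by
  simp only [add_apply, smul_apply, rankOne_apply, ← smul_assoc, Complex.real_smul]

theorem inner_smul_rankOne_add_smul_rankOne_apply {p q : E} (hp : ‖p‖ = 1)
    (hpq : ⟪p, q⟫_ℂ = 0) (l m : ℝ) (y : E) :
    ⟪p, (l • rankOne ℂ p p + m • rankOne ℂ q q) y⟫_ℂ = l * ⟪p, y⟫_ℂ := by
  rw [smul_rankOne_add_smul_rankOne_apply, inner_add_right, inner_smul_right, inner_smul_right,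
    hpq, inner_self_eq_norm_sq_to_K, hp]
  simp

theorem re_inner_smul_rankOne_add_smul_rankOne_apply_self (p q : E) (l m : ℝ) (y : E) :
    re ⟪(l • rankOne ℂ p p + m • rankOne ℂ q q) y, y⟫_ℂ =
      l * ‖⟪p, y⟫_ℂ‖ ^ 2 + m * ‖⟪q, y⟫_ℂ‖ ^ 2 := by
  rw [add_apply, inner_add_left, map_add, re_inner_smul_rankOne_self_apply,
    re_inner_smul_rankOne_self_apply]

theorem norm_smul_rankOne_add_smul_rankOne_apply_sq {p q : E} (hp : ‖p‖ = 1) (hq : ‖q‖ = 1)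
    (hpq : ⟪p, q⟫_ℂ = 0) (l m : ℝ) (y : E) :
    ‖(l • rankOne ℂ p p + m • rankOne ℂ q q) y‖ ^ 2 =
      l ^ 2 * ‖⟪p, y⟫_ℂ‖ ^ 2 + m ^ 2 * ‖⟪q, y⟫_ℂ‖ ^ 2 := by
  have horth : ⟪(l * ⟪p, y⟫_ℂ) • p, (m * ⟪q, y⟫_ℂ) • q⟫_ℂ = 0 := by
    rw [inner_smul_left, inner_smul_right, hpq, mul_zero, mul_zero]
  rw [smul_rankOne_add_smul_rankOne_apply, sq,
    norm_add_sq_eq_norm_sq_add_norm_sq_of_inner_eq_zero _ _ horth]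
  simp only [norm_smul, norm_mul, Complex.norm_real, Real.norm_eq_abs, hp, hq]
  rw [← sq_abs l, ← sq_abs m]
  ring

end TwoLevel

theorem strength_formula (P Q : H →L[ℂ] H)
    (hP : IsRankOneProjection P) (hQ : IsRankOneProjection Q) (hPQ : P ∘L Q = 0)
    (l m : ℝ) (hl : 0 < l) (hlm : l < m) (hsum : l + m = 1)
    (A : H →L[ℂ] H) (hA : A = l • P + m • Q)
    (p : H) (hp : ‖p‖ = 1) (hpP : LinearMap.range (P : H →ₗ[ℂ] H) = Submodule.span ℂ {p})
    (R : H →L[ℂ] H) (hR : IsRankOneProjection R)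
    (hRA : LinearMap.range (R : H →ₗ[ℂ] H) ≤ LinearMap.range (A : H →ₗ[ℂ] H)) :
    -- `tr (P * R) = re ⟪p, R p⟫` for the unit vector `p` spanning the range of `P`
    strength A R = l * m / ((m - l) * RCLike.re ⟪p, R p⟫_ℂ + l) := by
  have hm : 0 < m := hl.trans hlm
  obtain rfl := IsStarProjection.eq_rankOne_of_range_eq ⟨hP.1, hP.2.1⟩ hp hpP
  obtain ⟨q, hq, rfl⟩ := hQ.exists_eq_rankOne
  obtain ⟨r, hr, rfl⟩ := hR.exists_eq_rankOne
  have hpq : ⟪p, q⟫_ℂ = 0 := inner_eq_zero_of_rankOne_comp_rankOne_eq_zero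
    (norm_ne_zero_iff.mp (hp ▸ one_ne_zero)) (norm_ne_zero_iff.mp (hq ▸ one_ne_zero)) hPQ
  obtain ⟨y, rfl⟩ : ∃ y, A y = r := hRA ⟨r, by simp [inner_self_eq_norm_sq_to_K, hr]⟩
  have hApos : A.IsPositive := hA ▸ ((isPositive_rankOne_self p).smul_real hl.le).add
    ((isPositive_rankOne_self q).smul_real hm.le)
  set u := ‖⟪p, y⟫_ℂ‖ ^ 2
  set v := ‖⟪q, y⟫_ℂ‖ ^ 2
  have htr : re ⟪p, rankOne ℂ (A y) (A y) p⟫_ℂ = l ^ 2 * u := by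
    rw [inner_right_rankOne_apply, ← inner_conj_symm _ p, RCLike.mul_conj, hA,
      inner_smul_rankOne_add_smul_rankOne_apply hp hpq, ← ofReal_pow, ofReal_re, norm_mul,
      Complex.norm_real, Real.norm_eq_abs, mul_pow, sq_abs]
  have hnorm : l ^ 2 * u + m ^ 2 * v = 1 := by
    rw [← norm_smul_rankOne_add_smul_rankOne_apply_sq hp hq hpq, ← hA, hr, one_pow]
  have hs : re ⟪A y, y⟫_ℂ = l * u + m * v :=
    hA ▸ re_inner_smul_rankOne_add_smul_rankOne_apply_self p q l m y
  have hs1 : 1 ≤ re ⟪A y, y⟫_ℂ := by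
    have hgap : re ⟪A y, y⟫_ℂ - 1 = l * m * (u + v) := by
      rw [hs, ← hnorm]; linear_combination -(l * u + m * v) * hsum
    have : 0 ≤ l * m * (u + v) := by positivity
    linarith
  have hden : (m - l) * (l ^ 2 * u) + l = l * m * re ⟪A y, y⟫_ℂ := by
    rw [hs]; linear_combination (-l) * hnorm
  rw [hApos.strength_rankOne_apply_self (by linarith), min_eq_right (inv_le_one_of_one_le₀ hs1),
    htr, hden, div_mul_cancel_left₀ (mul_pos hl hm).ne']
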